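/- Suppose λ_k^{k−l,k−l'} = λ_k^{k−l',k−l} = λ_{k−l}^{k,k−l'} for all k, l, l' ∈ ℤ_K. Then for any array (u_{k,j}), ∑_{k∈ℤ_K}∑_{j∈ℤ_M}∑_{l≠0}∑_{l'≠0, l'≠l} u_{k,j} λ_k^{k−l,k−l'} (p_{k,j}^{l,l'} − p_{k,j−1}^{l,l'}) = 0, where p_{k,j}^{l,l'} = (1/6)(2u_{k−l,j}u_{k−l',j} + u_{k−l,j}u_{k−l',j+1} + u_{k−l,j+1}u_{k−l',j} + 2u_{k−l,j+1}u_{k−l',j+1}). -/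

import Mathlib

/-!
Writing `(a, b, c) = (k, k - l, k - l')`, the sum runs over triples of distinct indices, and
summation by parts in `j` turns it into `∑ λ_a^{b,c} ∑_j (u_{a,j} - u_{a,j+1}) p_j^{b,c}`. The
hypotheses make `λ` fully symmetric, in particular invariant under cyclic rotation of `(a, b, c)`,
so the sum is a third of its cyclic symmetrisation. That vanishes term by term: `p` is the mean
over `[0, 1]` of the product of two linear interpolants, so the cyclic sum of the
`(u_{a,j} - u_{a,j+1}) p_j^{b,c}` is an exact discrete product rule for `u_{a,j} u_{b,j} u_{c,j}`
and telescopes in `j`.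
-/

/-- `p_{k,j}^{l,l'} = (1/6)(2u_{k−l,j}u_{k−l',j} + u_{k−l,j}u_{k−l',j+1}
  + u_{k−l,j+1}u_{k−l',j} + 2u_{k−l,j+1}u_{k−l',j+1})`. -/
noncomputable def pTerm (K M : ℕ) (k : ZMod K) (j : ZMod M) (l l' : ZMod K)
    (u : (ZMod K × ZMod M) → ℝ) : ℝ :=
  (1 / 6) * (2 * u (k - l, j) * u (k - l', j) + u (k - l, j) * u (k - l', j + 1)
    + u (k - l, j + 1) * u (k - l', j) + 2 * u (k - l, j + 1) * u (k - l', j + 1))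

open Finset

/-- `∫₀¹ ((1 - t) x + t x') ((1 - t) y + t y') dt`. -/
noncomputable def interpProdMean (x x' y y' : ℝ) : ℝ :=
  (1 / 6) * (2 * x * y + x * y' + x' * y + 2 * x' * y')

lemma sub_mul_interpProdMean_cyclic (x x' y y' z z' : ℝ) :
    (x - x') * interpProdMean y y' z z' + (y - y') * interpProdMean z z' x x'
      + (z - z') * interpProdMean x x' y y' = x * y * z - x' * y' * z' := by
  unfold interpProdMean
  ring

section FiniteAddGroup

variable {G : Type*} [Fintype G] [AddGroup G]

lemma Fintype.sum_sub_comp_add_eq_zero {β : Type*} [AddCommGroup β] (f : G → β) (d : G) :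
    ∑ x, (f x - f (x + d)) = 0 := by
  rw [sum_sub_distrib, sub_eq_zero]
  exact (Equiv.sum_comp (Equiv.addRight d) f).symm

lemma Fintype.sum_mul_sub_comp_sub {R : Type*} [NonUnitalNonAssocRing R] (f g : G → R) (d : G) :
    ∑ x, f x * (g x - g (x - d)) = ∑ x, (f x - f (x + d)) * g x := by
  have shift : ∑ x, f x * g (x - d) = ∑ x, f (x + d) * g x := by
    rw [← Equiv.sum_comp (Equiv.addRight d)]
    simp only [Equiv.coe_addRight, add_sub_cancel_right]
  simp only [mul_sub, sub_mul, sum_sub_distrib, shift]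

lemma Fintype.sum_sub_mul_interpProdMean_cyclic (x y z : G → ℝ) (d : G) :
    ∑ j, (x j - x (j + d)) * interpProdMean (y j) (y (j + d)) (z j) (z (j + d))
      + ∑ j, (y j - y (j + d)) * interpProdMean (z j) (z (j + d)) (x j) (x (j + d))
      + ∑ j, (z j - z (j + d)) * interpProdMean (x j) (x (j + d)) (y j) (y (j + d)) = 0 := by
  simp only [← sum_add_distrib, sub_mul_interpProdMean_cyclic]
  exact Fintype.sum_sub_comp_add_eq_zero (fun j => x j * y j * z j) d

lemma Fintype.sum_erase_sum_erase_sub_eq_sum_ite [DecidableEq G] {β : Type*} [AddCommMonoid β]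
    (k : G) (F : G → G → β) :
    ∑ l ∈ univ.erase 0, ∑ l' ∈ (univ.erase 0).erase l, F (k - l) (k - l')
      = ∑ b, ∑ c, if b ≠ k ∧ c ≠ k ∧ c ≠ b then F b c else 0 := by
  simp only [← filter_ne', sum_filter, ite_and]
  refine Fintype.sum_equiv (Equiv.subLeft k) _ _ fun l => ?_
  simp only [Equiv.subLeft_apply, ne_eq, sub_eq_self]
  by_cases hl : l = 0
  · simp [hl]
  · simp only [hl, not_false_eq_true, if_true]
    refine Fintype.sum_equiv (Equiv.subLeft k) _ _ fun l' => ?_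
    simp only [Equiv.subLeft_apply, sub_eq_self, sub_right_inj]

end FiniteAddGroup

lemma Fintype.sum_eq_zero_of_add_comp_add_comp_eq_zero {α β : Type*} [Fintype α]
    [AddCommMonoid β] [IsAddTorsionFree β] (σ : Equiv.Perm α) (f : α → β)
    (hf : ∀ x, f x + f (σ x) + f (σ (σ x)) = 0) : ∑ x, f x = 0 := by
  have h3 : 3 • ∑ x, f x = 0 := by
    calc 3 • ∑ x, f x = ∑ x, f x + ∑ x, f (σ x) + ∑ x, f (σ (σ x)) := by
          rw [Equiv.sum_comp σ f, Equiv.sum_comp σ (fun x => f (σ x)), Equiv.sum_comp σ f]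
          abel
      _ = 0 := by simp only [← sum_add_distrib, hf, sum_const_zero]
  exact (nsmul_eq_zero_iff_right three_ne_zero).mp h3

lemma Fintype.sum_mul_eq_zero_of_cyclic {α R : Type*} [Fintype α]
    [NonUnitalNonAssocSemiring R] [IsAddTorsionFree R] (w f : α → α → α → R) (hw : ∀ a b c, w b c a = w a b c)
    (hf : ∀ a b c, f a b c + f b c a + f c a b = 0) :
    ∑ a, ∑ b, ∑ c, w a b c * f a b c = 0 := by
  let rot : Equiv.Perm (α × α × α) :=
    ⟨fun t => (t.2.1, t.2.2, t.1), fun t => (t.2.2, t.1, t.2.1), fun _ => rfl, fun _ => rfl⟩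
  simp only [← Fintype.sum_prod_type']
  refine Fintype.sum_eq_zero_of_add_comp_add_comp_eq_zero rot _ fun ⟨a, b, c⟩ => ?_
  change w a b c * f a b c + w b c a * f b c a + w c a b * f c a b = 0
  rw [hw b c a, hw a b c, ← mul_add, ← mul_add, hf, mul_zero]

theorem sum_u_mul_p_diff_eq_zero_general (K M : ℕ) [NeZero K] [NeZero M]
    (lam : ZMod K → ZMod K → ZMod K → ℝ)
    (hlam₁ : ∀ k l l' : ZMod K, lam k (k - l) (k - l') = lam k (k - l') (k - l))
    (hlam₂ : ∀ k l l' : ZMod K, lam k (k - l) (k - l') = lam (k - l) k (k - l'))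
    (u : (ZMod K × ZMod M) → ℝ) :
    ∑ k : ZMod K, ∑ j : ZMod M, ∑ l ∈ Finset.univ.erase (0 : ZMod K),
        ∑ l' ∈ (Finset.univ.erase (0 : ZMod K)).erase l,
          u (k, j) * lam k (k - l) (k - l')
            * (pTerm K M k j l l' u - pTerm K M k (j - 1) l l' u) = 0 := by
  have swap₂₃ (a b c) : lam a b c = lam a c b := by simpa using hlam₁ a (a - b) (a - c)
  have swap₁₂ (a b c) : lam a b c = lam b a c := by simpa using hlam₂ a (a - b) (a - c)
  set g : ZMod K → ZMod K → ZMod K → ℝ := fun a b c => ∑ j, (u (a, j) - u (a, j + 1)) *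
    interpProdMean (u (b, j)) (u (b, j + 1)) (u (c, j)) (u (c, j + 1))
  have lam_rotate (a b c) : lam b c a = lam a b c := by
    rw [swap₁₂ b, swap₂₃ c, swap₁₂ c, ← swap₂₃]
  have by_parts (k l l') : ∑ j, u (k, j) * lam k (k - l) (k - l')
      * (pTerm K M k j l l' u - pTerm K M k (j - 1) l l' u)
        = lam k (k - l) (k - l') * g k (k - l) (k - l') := by
    simp only [mul_comm (u _) (lam _ _ _), mul_assoc, ← mul_sum]
    -- `pTerm K M k j l l' u` is `interpProdMean` of `u (k - l, ·)` and `u (k - l', ·)` at `j, j + 1`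
    exact congrArg _ (Fintype.sum_mul_sub_comp_sub (fun j => u (k, j)) (pTerm K M k · l l' u) 1)
  calc _ = ∑ k, ∑ b, ∑ c, (if b ≠ k ∧ c ≠ k ∧ c ≠ b then lam k b c else 0) * g k b c := by
        refine sum_congr rfl fun k _ => ?_
        rw [sum_comm]
        simp only [sum_comm (γ := ZMod M), by_parts, ite_mul, zero_mul]
        exact Fintype.sum_erase_sum_erase_sub_eq_sum_ite k (fun b c => lam k b c * g k b c)
    _ = 0 := by
        refine Fintype.sum_mul_eq_zero_of_cyclic _ _ (fun a b c => ?_) (fun a b c => ?_)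
        · exact if_congr (by simp only [ne_comm]; tauto) (lam_rotate a b c) rfl
        · exact Fintype.sum_sub_mul_interpProdMean_cyclic (fun j => u (a, j)) (fun j => u (b, j))
            (fun j => u (c, j)) 1

/-- If `λ_k^{k−l,k−l'} = λ_k^{k−l',k−l} = λ_{k−l}^{k,k−l'}` for all `k, l, l'`, then
`∑_{k,j,l≠0,l'≠0,l'≠l} u_{k,j} λ_k^{k−l,k−l'} (p_{k,j}^{l,l'} − p_{k,j−1}^{l,l'}) = 0`. -/
theorem sum_u_mul_p_diff_eq_zero (K M : ℕ) [NeZero K] [NeZero M] (hK : 3 ≤ K) (hM : 2 ≤ M)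
    (lam : ZMod K → ZMod K → ZMod K → ℝ)
    (hlam₁ : ∀ k l l' : ZMod K, lam k (k - l) (k - l') = lam k (k - l') (k - l))
    (hlam₂ : ∀ k l l' : ZMod K, lam k (k - l) (k - l') = lam (k - l) k (k - l'))
    (u : (ZMod K × ZMod M) → ℝ) :
    ∑ k : ZMod K, ∑ j : ZMod M, ∑ l ∈ Finset.univ.erase (0 : ZMod K),
        ∑ l' ∈ (Finset.univ.erase (0 : ZMod K)).erase l,
          u (k, j) * lam k (k - l) (k - l')
            * (pTerm K M k j l l' u - pTerm K M k (j - 1) l l' u) = 0 :=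
  sum_u_mul_p_diff_eq_zero_general K M lam hlam₁ hlam₂ u
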